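/- Let a : ℝ → [0,1] be the extended Cantor staircase function (a(τ) = 0 for τ ≤ 0, a(τ) = 1 for τ ≥ 1, and a restricted to [0,1] is the Cantor function), and let C ⊂ [0,1] be the ternary Cantor set. For y ∈ ℝ define C_y := { a(τ)·y²/2 + τ : τ ∈ C }. Then C_y is compact and its Lebesgue measure is ℒ¹(C_y) = y²/2. -/

import Mathlib

open MeasureTheory

/-- The n-th stage of the ternary Cantor set construction. -/
def cantorStage : ℕ → Set ℝ
  | 0 => Set.Icc 0 1
  | n + 1 => (fun x => x / 3) '' cantorStage n ∪ (fun x => 2 / 3 + x / 3) '' cantorStage n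

/-- The ternary Cantor set. -/
def ternaryCantorSet : Set ℝ := ⋂ n, cantorStage n

/-- a : ℝ → ℝ is the extended Cantor staircase function: continuous, nondecreasing,
equal to 0 on (−∞,0], 1 on [1,∞), and satisfying the Cantor self-similarity relations. -/
def IsCantorFunction (a : ℝ → ℝ) : Prop :=
  Continuous a ∧ Monotone a ∧ (∀ τ ≤ 0, a τ = 0) ∧ (∀ τ, 1 ≤ τ → a τ = 1) ∧
    ∀ τ ∈ Set.Icc (0 : ℝ) 1, a (τ / 3) = a τ / 2 ∧ a (2 / 3 + τ / 3) = 1 / 2 + a τ / 2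

/-!
For `c ≥ 0` the shear `τ ↦ a τ * c + τ` is continuous and injective, so the image of the Cantor
set is compact and is the intersection of the images of the Cantor stages. By the
self-similarity of `a`, the image of the `(n+1)`-st Cantor stage under the shear with parameter `c`
is the union of two disjoint copies, scaled by `1/3`, of the image of the `n`-th stage under the
shear with parameter `3c/2`. Induction on `n` then gives measure `c + (2/3)^n` for the image of
the `n`-th stage, and continuity of measure from above gives `c` for the image of the Cantor set.
-/

open Set
open scoped Pointwise

lemma cantorStage_subset_Icc (n : ℕ) : cantorStage n ⊆ Icc 0 1 := by
  induction n with
  | zero => exact subset_rfl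
  | succ n ih =>
    rintro x (⟨t, ht, rfl⟩ | ⟨t, ht, rfl⟩) <;> obtain ⟨h0, h1⟩ := ih ht <;> constructor <;> linarith

lemma isCompact_cantorStage (n : ℕ) : IsCompact (cantorStage n) := by
  induction n with
  | zero => exact isCompact_Icc
  | succ n ih => exact (ih.image (by fun_prop)).union (ih.image (by fun_prop))

lemma cantorStage_succ_subset (n : ℕ) : cantorStage (n + 1) ⊆ cantorStage n := by
  induction n with
  | zero =>
    rintro x (⟨t, ⟨h0, h1⟩, rfl⟩ | ⟨t, ⟨h0, h1⟩, rfl⟩) <;> constructor <;> linarith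
  | succ n ih => exact union_subset_union (image_mono ih) (image_mono ih)

lemma antitone_cantorStage : Antitone cantorStage :=
  antitone_nat_of_succ_le cantorStage_succ_subset

lemma isCompact_ternaryCantorSet : IsCompact ternaryCantorSet :=
  (isCompact_cantorStage 0).of_isClosed_subset
    (isClosed_iInter fun n => (isCompact_cantorStage n).isClosed) (iInter_subset _ 0)

lemma Real.volume_image_add_div_three (b : ℝ) (s : Set ℝ) :
    volume ((fun x => b + x / 3) '' s) = ENNReal.ofReal (1 / 3) * volume s := by
  have : (fun x : ℝ => b + x / 3) '' s = b +ᵥ ((1 / 3 : ℝ) • s) := by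
    rw [← image_smul, ← image_vadd, image_image]
    simp [div_eq_inv_mul]
  rw [this, measure_vadd, Measure.addHaar_smul_of_nonneg _ (by norm_num)]
  simp

def cantorShear (a : ℝ → ℝ) (c τ : ℝ) : ℝ := a τ * c + τ

section

variable {a : ℝ → ℝ} {c : ℝ}

lemma continuous_cantorShear (ha : Continuous a) : Continuous (cantorShear a c) := by
  unfold cantorShear; fun_prop

lemma strictMono_cantorShear (ha : Monotone a) (hc : 0 ≤ c) : StrictMono (cantorShear a c) :=
  fun x y hxy => by
    have := mul_le_mul_of_nonneg_right (ha hxy.le) hc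
    simp only [cantorShear]; linarith

lemma cantorShear_image_Icc (ha : IsCantorFunction a) (hc : 0 ≤ c) :
    cantorShear a c '' Icc 0 1 = Icc 0 (c + 1) := by
  obtain ⟨hcont, hmono, hle, hge, -⟩ := ha
  rw [(continuous_cantorShear hcont).image_Icc_of_strictMono (strictMono_cantorShear hmono hc)]
  simp [cantorShear, hle 0 le_rfl, hge 1 le_rfl]

lemma cantorShear_image_cantorStage_succ (ha : IsCantorFunction a) (n : ℕ) :
    cantorShear a c '' cantorStage (n + 1) =
      (fun x => 0 + x / 3) '' (cantorShear a (3 / 2 * c) '' cantorStage n) ∪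
        (fun x => (c / 2 + 2 / 3) + x / 3) '' (cantorShear a (3 / 2 * c) '' cantorStage n) := by
  obtain ⟨-, -, -, -, hself⟩ := ha
  rw [cantorStage, image_union, image_image, image_image, image_image, image_image]
  congr 1
  · refine image_congr fun τ hτ => ?_
    simp only [cantorShear, (hself τ (cantorStage_subset_Icc n hτ)).1]; ring
  · refine image_congr fun τ hτ => ?_
    simp only [cantorShear, (hself τ (cantorStage_subset_Icc n hτ)).2]; ring

lemma volume_cantorShear_image_cantorStage (ha : IsCantorFunction a) (n : ℕ) (hc : 0 ≤ c) :
    volume (cantorShear a c '' cantorStage n) = ENNReal.ofReal (c + (2 / 3) ^ n) := by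
  induction n generalizing c with
  | zero =>
    rw [cantorStage, cantorShear_image_Icc ha hc, Real.volume_Icc]
    norm_num
  | succ n ih =>
    have hc' : 0 ≤ 3 / 2 * c := by positivity
    set S := cantorShear a (3 / 2 * c) '' cantorStage n
    have hS : S ⊆ Icc 0 (3 / 2 * c + 1) :=
      cantorShear_image_Icc ha hc' ▸ image_mono (cantorStage_subset_Icc n)
    have hdisj : Disjoint ((fun x => 0 + x / 3) '' S) ((fun x => (c / 2 + 2 / 3) + x / 3) '' S) := by
      refine disjoint_left.mpr ?_
      rintro _ ⟨s, hs, rfl⟩ ⟨t, ht, hst⟩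
      linarith [(hS hs).2, (hS ht).1]
    have hmeas : MeasurableSet ((fun x => (c / 2 + 2 / 3) + x / 3) '' S) :=
      (((isCompact_cantorStage n).image (continuous_cantorShear ha.1)).image
        (by fun_prop)).isClosed.measurableSet
    rw [cantorShear_image_cantorStage_succ ha, measure_union hdisj hmeas,
      Real.volume_image_add_div_three, Real.volume_image_add_div_three, ih hc',
      ← ENNReal.ofReal_mul (by norm_num), ← ENNReal.ofReal_add (by positivity) (by positivity)]
    congr 1
    ring

end

/-- C_y = {a(τ)y²/2 + τ : τ ∈ C} is compact of Lebesgue measure y²/2. -/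
theorem stmt_12 (a : ℝ → ℝ) (ha : IsCantorFunction a) (y : ℝ) :
    IsCompact ((fun τ => a τ * y ^ 2 / 2 + τ) '' ternaryCantorSet) ∧
    volume ((fun τ => a τ * y ^ 2 / 2 + τ) '' ternaryCantorSet) = ENNReal.ofReal (y ^ 2 / 2) := by
  have hc : 0 ≤ y ^ 2 / 2 := by positivity
  have hshear : (fun τ => a τ * y ^ 2 / 2 + τ) = cantorShear a (y ^ 2 / 2) := by
    ext τ; simp only [cantorShear]; ring
  rw [hshear]
  refine ⟨isCompact_ternaryCantorSet.image (continuous_cantorShear ha.1), ?_⟩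
  rw [ternaryCantorSet, (strictMono_cantorShear ha.2.1 hc).injective.injOn.image_iInter_eq]
  have hlim := tendsto_measure_iInter_atTop (μ := volume)
    (s := fun n => cantorShear a (y ^ 2 / 2) '' cantorStage n)
    (fun n => ((isCompact_cantorStage n).image
      (continuous_cantorShear ha.1)).isClosed.measurableSet.nullMeasurableSet)
    (fun m n hmn => image_mono (antitone_cantorStage hmn))
    ⟨0, by simp [volume_cantorShear_image_cantorStage ha 0 hc]⟩
  refine tendsto_nhds_unique hlim ?_
  simp only [Function.comp_def, volume_cantorShear_image_cantorStage ha _ hc]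
  refine ENNReal.tendsto_ofReal ?_
  simpa using tendsto_const_nhds.add
    (tendsto_pow_atTop_nhds_zero_of_lt_one (by norm_num : (0 : ℝ) ≤ 2 / 3) (by norm_num))
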